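/- arXiv:1112.1929 — 5 statements merged into one kernel-verified Lean document; each statement's English description precedes it below -/
import Mathlib

section
/- Let G be a finite abelian group of odd order and let B, S be subsets of G with |B| = b, 2b ≤ |G|, and |S| = s ≥ 3. Assume that S generates G, that S ∩ (−S) = ∅, and that Ŝ = S ∪ {0} ∪ (−S) has a Vosper-representation, i.e., there exists a subgroup H of G with |Ŝ + H| < min(|G|, |Ŝ| + |H|) such that the image of Ŝ under the canonical map φ : G → G/H is a Vosper subset of G/H. Let t, r, q be integers with 1 ≤ t ≤ |G| − 1, t = r(2s+2) + q and −1 ≤ q ≤ 2s. Then max_{x ∈ S} λ_B(x) ≥ 4(s+1)·b·(t−b+1) / ( t(t+2s+6) + q(2s−q−2) ). -/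
/-!
`lam B` is subadditive, even and vanishes at `0`, so on the `k`-fold sumset `k • Ŝ` it is at most
`k * ℓ`, where `ℓ = max_{x ∈ S} lam B x`. The Vosper representation makes these sumsets grow fast:
modulo `H`, Vosper's inequality plus the fact that symmetric sets containing `0` have odd size in an
odd group gives `|k • φ(Ŝ)| ≥ min |G/H| (k (|φ(Ŝ)| + 1) - 1)`; and since `Ŝ` nearly fills `Ŝ + H`,
the sumsets `k • Ŝ` with `k ≥ 2` are unions of `H`-cosets. Hence
`|k • Ŝ| ≥ min |G| (k (2s + 2) - 1)`.

Now let `T` consist of `t + 1` elements taken layer by layer from `0 • Ŝ ⊆ 1 • Ŝ ⊆ ⋯`. Since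
`∑_{x ∈ G} |(B + x) ∩ B| = b²`, we get `∑_{x ∈ T} lam B x ≥ b (t + 1) - b²`, while the layer bound
gives `∑_{x ∈ T} lam B x ≤ ℓ ∑_k (t + 1 - |k • Ŝ|)`; evaluating this sum with the growth estimate
at `t = r (2s + 2) + q` produces the denominator.
-/

open Finset Pointwise

/-- `lam B x = |(B + x) \ B|`. -/
def lam {G : Type*} [AddCommGroup G] [DecidableEq G] (B : Finset G) (x : G) : ℕ :=
  ((B.image (· + x)) \ B).card

/-- A subset `X` of a finite abelian group `H` is a Vosper subset of `H` if for every
`Y ⊆ H` with `|Y| ≥ 2` one has `|X + Y| ≥ min (|H| - 1) (|X| + |Y|)`. -/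
def IsVosper {H : Type*} [AddCommGroup H] (X : Set H) : Prop :=
  ∀ Y : Set H, 2 ≤ Y.ncard → min (Nat.card H - 1) (X.ncard + Y.ncard) ≤ (X + Y).ncard

section Lam

variable {G : Type*} [AddCommGroup G] [DecidableEq G] (B : Finset G)

lemma lam_eq_card_vadd_sdiff (x : G) : lam B x = #((x +ᵥ B) \ B) := by
  rw [lam, ← Finset.image_vadd]
  simp only [vadd_eq_add, add_comm x]

@[simp] lemma lam_zero : lam B 0 = 0 := by
  simp [lam_eq_card_vadd_sdiff]

lemma lam_neg (x : G) : lam B (-x) = lam B x := by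
  rw [lam_eq_card_vadd_sdiff, lam_eq_card_vadd_sdiff, ← card_vadd_finset x, vadd_finset_sdiff,
    vadd_neg_vadd, card_sdiff_comm (card_vadd_finset x B)]

lemma lam_add_le (x y : G) : lam B (x + y) ≤ lam B x + lam B y := by
  simp only [lam_eq_card_vadd_sdiff]
  calc #(((x + y) +ᵥ B) \ B)
      ≤ #((y +ᵥ ((x +ᵥ B) \ B)) ∪ ((y +ᵥ B) \ B)) := by
        refine card_le_card fun g hg => ?_
        rw [vadd_finset_sdiff, vadd_vadd, add_comm y x]
        simp only [mem_union, mem_sdiff] at hg ⊢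
        tauto
    _ ≤ #((x +ᵥ B) \ B) + #((y +ᵥ B) \ B) := by
        grw [card_union_le, card_vadd_finset]

lemma lam_add_card_vadd_inter (x : G) : lam B x + #((x +ᵥ B) ∩ B) = #B := by
  rw [lam_eq_card_vadd_sdiff, card_sdiff_add_card_inter, card_vadd_finset]

lemma lam_le_nsmul_of_forall_le {A : Finset G} {ℓ : ℕ} (hA : ∀ a ∈ A, lam B a ≤ ℓ) :
    ∀ k, ∀ x ∈ k • A, lam B x ≤ k * ℓ
  | 0, x, hx => by simp_all
  | k + 1, x, hx => by
    obtain ⟨y, hy, a, ha, rfl⟩ := mem_add.1 (succ_nsmul A k ▸ hx)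
    grw [lam_add_le, lam_le_nsmul_of_forall_le hA k y hy, hA a ha, add_one_mul]

lemma sum_card_vadd_inter [Fintype G] : ∑ x : G, #((x +ᵥ B) ∩ B) = #B * #B := by
  simp only [card_vadd_inter]
  calc ∑ x : G, B.addConvolution (-B) (-x) = ∑ x : G, B.addConvolution (-B) x :=
        Fintype.sum_equiv (Equiv.neg G) _ _ fun _ => rfl
    _ = #(B ×ˢ (-B)) := (card_eq_sum_card_fiberwise (s := B ×ˢ (-B)) (t := univ)
        (f := fun ab => ab.1 + ab.2) fun _ _ => mem_coe.2 (mem_univ _)).symm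
    _ = #B * #B := by rw [card_product, card_neg]

lemma card_mul_le_sum_lam_add [Fintype G] (T : Finset G) :
    #T * #B ≤ ∑ x ∈ T, lam B x + #B * #B := by
  calc #T * #B = ∑ x ∈ T, (lam B x + #((x +ᵥ B) ∩ B)) := by
        simp [lam_add_card_vadd_inter]
    _ ≤ ∑ x ∈ T, lam B x + ∑ x : G, #((x +ᵥ B) ∩ B) := by
        rw [sum_add_distrib]
        gcongr
        exact subset_univ T
    _ = ∑ x ∈ T, lam B x + #B * #B := by rw [sum_card_vadd_inter]

end Lam

/-- `T` is filled greedily along the chain; `∑ k < K, (n - |P k|)` counts each element of `T`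
with multiplicity the index of the first `P k` containing it. -/
lemma exists_card_eq_sum_le_mul_sum_tsub {α : Type*} [DecidableEq α] {P : ℕ → Finset α}
    (hP : Monotone P) {f : α → ℕ} {ℓ : ℕ} (hf : ∀ k, ∀ x ∈ P k, f x ≤ k * ℓ) :
    ∀ {K n : ℕ}, n ≤ #(P K) →
      ∃ T ⊆ P K, #T = n ∧ ∑ x ∈ T, f x ≤ ℓ * ∑ k ∈ range K, (n - #(P k))
  | 0, n, hn => by
    obtain ⟨T, hT, rfl⟩ := exists_subset_card_eq hn
    refine ⟨T, hT, rfl, ?_⟩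
    simpa using fun x hx => hf 0 x (hT hx)
  | K + 1, n, hn => by
    have hPK : P K ⊆ P (K + 1) := hP (Nat.le_add_right K 1)
    rcases le_or_gt n #(P K) with hnK | hnK
    · obtain ⟨T, hT, hTn, hsum⟩ := exists_card_eq_sum_le_mul_sum_tsub hP hf hnK
      refine ⟨T, hT.trans hPK, hTn, hsum.trans ?_⟩
      rw [sum_range_succ]
      exact Nat.mul_le_mul_left _ (Nat.le_add_right _ _)
    obtain ⟨T, hT, hTn, hsum⟩ := exists_card_eq_sum_le_mul_sum_tsub hP hf le_rfl
    obtain rfl : T = P K := eq_of_subset_of_card_le hT hTn.ge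
    have hsd : n - #(P K) ≤ #(P (K + 1) \ P K) := by
      rw [card_sdiff_of_subset hPK]
      omega
    obtain ⟨E, hE, hEn⟩ := exists_subset_card_eq hsd
    have hdisj : Disjoint (P K) E := disjoint_of_subset_right hE disjoint_sdiff
    refine ⟨P K ∪ E, union_subset hPK (hE.trans sdiff_subset), ?_, ?_⟩
    · rw [card_union_of_disjoint hdisj]
      omega
    have hE_sum : ∑ x ∈ E, f x ≤ (n - #(P K)) * ((K + 1) * ℓ) := by
      grw [sum_le_card_nsmul E f _ fun x hx => hf (K + 1) x (sdiff_subset (hE hx)), hEn,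
        smul_eq_mul]
    have hsplit : ∑ k ∈ range K, (n - #(P k))
        = ∑ k ∈ range K, (#(P K) - #(P k)) + K * (n - #(P K)) := by
      have hterm : ∀ k ∈ range K, n - #(P k) = (#(P K) - #(P k)) + (n - #(P K)) := fun k hk => by
        have := card_le_card (hP (mem_range.1 hk).le)
        omega
      rw [sum_congr rfl hterm, sum_add_distrib, sum_const, card_range, smul_eq_mul]
    rw [sum_union hdisj, sum_range_succ, hsplit]
    nlinarith

lemma two_mul_sum_range_sub_mul (a m : ℤ) :
    ∀ r : ℕ, 2 * ∑ k ∈ range r, (a - (k + 1) * m) = r * (2 * a - (r + 1) * m)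
  | 0 => by simp
  | r + 1 => by
    rw [sum_range_succ, mul_add, two_mul_sum_range_sub_mul a m r]
    push_cast
    ring

lemma two_mul_sum_range_tsub_le {c : ℕ → ℕ} {N m t r : ℕ} {q : ℤ} (hc0 : c 0 = 1)
    (hc : ∀ k, min N (k * m - 1) ≤ c k) (htN : t + 1 ≤ N) (ht : (t : ℤ) = r * m + q)
    (hq : -1 ≤ q) :
    2 * m * ((∑ k ∈ range (r + 1), (t + 1 - c k) : ℕ) : ℤ) ≤
      t * (t + m + 4) + q * (m - 4 - q) := by
  have hterm : ∀ k ∈ range r, ((t + 1 - c (k + 1) : ℕ) : ℤ) ≤ t + 2 - (k + 1) * m := by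
    intro k hk
    have hkr : (k + 1 : ℤ) * m ≤ r * m := by
      gcongr
      exact_mod_cast mem_range.1 hk
    have hck := hc (k + 1)
    generalize hp : (k + 1) * m = p at hck
    have hpz : (p : ℤ) = (k + 1) * m := by rw [← hp]; push_cast; ring
    rw [← hpz] at hkr ⊢
    omega
  have hsum := sum_le_sum hterm
  have hmid := two_mul_sum_range_sub_mul (t + 2) m r
  rw [sum_range_succ', hc0]
  push_cast
  nlinarith [mul_le_mul_of_nonneg_left hsum (by positivity : (0 : ℤ) ≤ 2 * m)]

lemma two_mul_mul_le_of_eq_mul_add {t m q : ℤ} {r : ℕ} (ht : t = r * m + q) (hq : -1 ≤ q)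
    (hm : 0 ≤ m) : 2 * m * t ≤ t * (t + m + 4) + q * (m - 4 - q) := by
  subst ht
  rcases r with _ | r
  · push_cast
    nlinarith
  · have hrm : 0 ≤ (r : ℤ) * m := mul_nonneg r.cast_nonneg hm
    have hrm' : 0 ≤ ((r : ℤ) + 1) * m := mul_nonneg (by positivity) hm
    push_cast
    nlinarith [mul_nonneg hrm' hrm, mul_nonneg hrm' (by linarith : (0 : ℤ) ≤ 2 * q + 4)]

section OddOrder

variable {Q : Type*} [AddCommGroup Q]

lemma eq_zero_of_neg_eq_self (hQ : Odd (Nat.card Q)) {a : Q} (h : -a = a) : a = 0 :=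
  (Nat.Coprime.nsmul_right_bijective (Nat.coprime_two_right.2 hQ)).1 <| by
    simp only [two_nsmul, add_zero]
    nth_rw 1 [← h]
    exact neg_add_cancel a

lemma odd_ncard_of_neg_eq (hQ : Odd (Nat.card Q)) {A : Set Q} (h0 : (0 : Q) ∈ A) (hA : -A = A) :
    Odd A.ncard := by
  classical
  have : Finite Q := Nat.finite_of_card_ne_zero hQ.pos.ne'
  set F := A.toFinite.toFinset.erase 0
  have hF : ∀ a ∈ F, -a ∈ F := fun a ha => by
    simp only [F, mem_erase, Set.Finite.mem_toFinset, ne_eq, neg_eq_zero] at ha ⊢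
    exact ⟨ha.1, hA ▸ Set.neg_mem_neg.2 ha.2⟩
  have hsum : ∑ _a ∈ F, (1 : ZMod 2) = 0 :=
    sum_involution (fun a _ => -a) (fun _ _ => by decide)
      (fun a ha _ h => (mem_erase.1 ha).1 (eq_zero_of_neg_eq_self hQ h)) hF
      (fun a _ => neg_neg a)
  rw [sum_const, nsmul_one, ZMod.natCast_eq_zero_iff_even] at hsum
  rw [Set.ncard_eq_toFinset_card A, ← card_erase_add_one (A.toFinite.mem_toFinset.2 h0)]
  exact hsum.add_one

/-- All sumsets here are symmetric and contain `0`, so they have odd size, as has the group;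
this turns Vosper's bound `min (|Q| - 1) (|X| + |Y|)` into `min |Q| (|X| + |Y| + 1)`. -/
lemma IsVosper.ncard_nsmul_ge (hQ : Odd (Nat.card Q)) {X : Set Q} (hX : IsVosper X)
    (h0 : (0 : Q) ∈ X) (hneg : -X = X) (h2 : 2 ≤ X.ncard) :
    ∀ k, min (Nat.card Q) (k * (X.ncard + 1) - 1) ≤ (k • X).ncard
  | 0 => by simp
  | 1 => by simp
  | k + 2 => by
    have : Finite Q := Nat.finite_of_card_ne_zero hQ.pos.ne'
    have ih := IsVosper.ncard_nsmul_ge hQ hX h0 hneg h2 (k + 1)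
    have hXY : X ⊆ (k + 1) • X := Set.subset_nsmul h0 k.succ_ne_zero
    have hY := Set.ncard_le_ncard hXY
    have hv := hX _ (h2.trans hY)
    rw [← succ_nsmul'] at hv
    change _ ≤ ((k + 2) • X).ncard at hv
    have hodd : ∀ n, Odd ((n • X).ncard) := fun n =>
      odd_ncard_of_neg_eq hQ (Set.zero_mem_nsmul h0) (by rw [← neg_nsmul, hneg])
    have hle : ((k + 2) • X).ncard ≤ Nat.card Q := Set.ncard_le_card _
    have hX1 := odd_ncard_of_neg_eq hQ h0 hneg
    have hXk := hodd (k + 1)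
    have hXk' := hodd (k + 2)
    rw [Nat.odd_iff] at hX1 hXk hXk' hQ
    have hexp : (k + 2) * (X.ncard + 1) = (k + 1) * (X.ncard + 1) + X.ncard + 1 := by ring
    omega

end OddOrder

section Coset

variable {G : Type*} [AddCommGroup G] {H : AddSubgroup G}

lemma ncard_preimage_mk (T : Set (G ⧸ H)) :
    (QuotientAddGroup.mk ⁻¹' T : Set G).ncard = Nat.card H * T.ncard := by
  rw [← Nat.card_coe_set_eq,
    Nat.card_congr (QuotientAddGroup.preimageMkEquivAddSubgroupProdSet H T), Nat.card_prod,
    Nat.card_coe_set_eq]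

variable (H) in
def cosetHoles (A : Set G) (ξ : G ⧸ H) : Set G := QuotientAddGroup.mk ⁻¹' {ξ} \ A

variable {A : Set G} {ξ η : G ⧸ H}

lemma ncard_cosetHoles_neg (hA : -A = A) (ξ : G ⧸ H) :
    (cosetHoles H A (-ξ)).ncard = (cosetHoles H A ξ).ncard := by
  rw [← Set.ncard_neg]
  congr 1
  ext x
  simp only [cosetHoles, Set.mem_neg, Set.mem_sdiff, Set.mem_preimage, Set.mem_singleton_iff,
    QuotientAddGroup.mk_neg, neg_inj]
  rw [← Set.mem_neg, hA]

variable [Finite G]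

/-- All holes of `A` in the cosets it meets lie in `(A + H) \ A`. -/
lemma ncard_cosetHoles_add_lt (hA : (A + H).ncard < A.ncard + Nat.card H)
    (hξ : ξ ∈ QuotientAddGroup.mk '' A) (hη : η ∈ QuotientAddGroup.mk '' A) (hne : ξ ≠ η) :
    (cosetHoles H A ξ).ncard + (cosetHoles H A η).ncard < Nat.card H := by
  have hsub : cosetHoles H A ξ ∪ cosetHoles H A η ⊆ (A + H) \ A := by
    rw [← QuotientAddGroup.preimage_image_mk_eq_add]
    rintro x (⟨hx, hxA⟩ | ⟨hx, hxA⟩)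
    · exact ⟨by rwa [Set.mem_preimage, Set.mem_singleton_iff.1 hx], hxA⟩
    · exact ⟨by rwa [Set.mem_preimage, Set.mem_singleton_iff.1 hx], hxA⟩
  have hdisj : Disjoint (cosetHoles H A ξ) (cosetHoles H A η) :=
    ((Set.disjoint_singleton.2 hne).preimage _).mono Set.sdiff_subset Set.sdiff_subset
  have hle := Set.ncard_le_ncard hsub
  rw [Set.ncard_union_eq hdisj, Set.ncard_sdiff (Set.subset_add_left A H.zero_mem)] at hle
  have := Nat.card_pos (α := H)
  omega

lemma mem_add_of_ncard_cosetHoles_add_lt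
    (h : (cosetHoles H A ξ).ncard + (cosetHoles H A η).ncard < Nat.card H) {w : G}
    (hw : (w : G ⧸ H) = ξ + η) : w ∈ A + A := by
  by_contra hwA
  have hcover :
      QuotientAddGroup.mk ⁻¹' {ξ} ⊆ cosetHoles H A ξ ∪ (w - ·) '' cosetHoles H A η := by
    intro x hx
    by_cases hxA : x ∈ A
    · refine Or.inr ⟨w - x, ⟨?_, fun h => hwA ⟨x, hxA, w - x, h, add_sub_cancel x w⟩⟩,
        sub_sub_cancel w x⟩
      simp_all
    · exact Or.inl ⟨hx, hxA⟩
  have := (Set.ncard_le_ncard hcover).trans (Set.ncard_union_le _ _)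
  rw [Set.ncard_image_of_injective _ sub_right_injective, ncard_preimage_mk, Set.ncard_singleton,
    mul_one] at this
  omega

/-- Two distinct cosets met by `A` have fewer than `|H|` holes together, so their sum is covered
by `A + A`; a coset `ξ ≠ 0` is paired with `-ξ ≠ ξ`, and `0` with `±a` for some `a ∈ A \ H`. -/
lemma add_add_addSubgroup_eq (hG : Odd (Nat.card G)) (hneg : -A = A) (hAH : ¬ A ⊆ H)
    (hA : (A + H).ncard < A.ncard + Nat.card H) : A + A + H = A + A := by
  refine (Set.subset_add_left _ H.zero_mem).antisymm' ?_
  rintro _ ⟨_, ⟨a₁, ha₁, a₂, ha₂, rfl⟩, h, hh, rfl⟩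
  have hw : ((a₁ + a₂ + h : G) : G ⧸ H) = a₁ + a₂ := by
    rw [QuotientAddGroup.mk_add, (QuotientAddGroup.eq_zero_iff h).2 hh, add_zero,
      QuotientAddGroup.mk_add]
  have hQ : Odd (Nat.card (G ⧸ H)) := hG.of_dvd_nat (AddSubgroup.card_quotient_dvd_card H)
  have hmem : ∀ a ∈ A, (a : G ⧸ H) ∈ QuotientAddGroup.mk '' A := fun a ha => ⟨a, ha, rfl⟩
  have hnegmem : ∀ a ∈ A, -(a : G ⧸ H) ∈ QuotientAddGroup.mk '' A :=
    fun a ha => ⟨-a, hneg ▸ Set.neg_mem_neg.2 ha, rfl⟩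
  have hpair : ∀ a ∈ A, (a : G ⧸ H) ≠ 0 →
      (cosetHoles H A a).ncard + (cosetHoles H A (-a)).ncard < Nat.card H := fun a ha ha0 =>
    ncard_cosetHoles_add_lt hA (hmem a ha) (hnegmem a ha)
      fun h => ha0 (eq_zero_of_neg_eq_self hQ h.symm)
  by_cases hξη : (a₁ : G ⧸ H) = a₂
  · by_cases hξ0 : (a₁ : G ⧸ H) = 0
    · obtain ⟨a, ha, haH⟩ := Set.not_subset.1 hAH
      refine mem_add_of_ncard_cosetHoles_add_lt
        (hpair a ha (mt (QuotientAddGroup.eq_zero_iff a).1 haH)) ?_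
      rw [hw, ← hξη, hξ0, add_zero, add_neg_cancel]
    · have := hpair a₁ ha₁ hξ0
      rw [ncard_cosetHoles_neg hneg] at this
      exact mem_add_of_ncard_cosetHoles_add_lt this (hξη ▸ hw)
  · exact mem_add_of_ncard_cosetHoles_add_lt
      (ncard_cosetHoles_add_lt hA (hmem a₁ ha₁) (hmem a₂ ha₂) hξη) hw

end Coset

section Growth

variable {G : Type*} [AddCommGroup G] {H : AddSubgroup G} {A : Set G}

lemma ncard_nsmul_add_two (hper : A + A + H = A + A) (k : ℕ) :
    ((k + 2) • A).ncard = Nat.card H * ((k + 2) • (QuotientAddGroup.mk' H '' A)).ncard := by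
  have hperk : (k + 2) • A + H = (k + 2) • A := by
    rw [add_nsmul, two_nsmul, add_assoc, hper]
  rw [← Set.image_nsmul, QuotientAddGroup.coe_mk', ← ncard_preimage_mk,
    QuotientAddGroup.preimage_image_mk_eq_add, hperk]

variable [Finite G]

theorem ncard_nsmul_ge_of_isVosper_image (hG : Odd (Nat.card G)) (h0 : (0 : G) ∈ A)
    (hneg : -A = A) (hAH : ¬ A ⊆ H) (hA : (A + H).ncard < A.ncard + Nat.card H)
    (hV : IsVosper (QuotientAddGroup.mk' H '' A)) :
    ∀ k, min (Nat.card G) (k * (A.ncard + 1) - 1) ≤ (k • A).ncard := by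
  rintro (_ | _ | k)
  · simp
  · simp
  · set X := QuotientAddGroup.mk' H '' A
    have hQ : Odd (Nat.card (G ⧸ H)) := hG.of_dvd_nat (AddSubgroup.card_quotient_dvd_card H)
    have hX0 : (0 : G ⧸ H) ∈ X := ⟨0, h0, map_zero _⟩
    have hXneg : -X = X := by rw [← Set.image_neg, hneg]
    obtain ⟨a, ha, haH⟩ := Set.not_subset.1 hAH
    have hX2 : 2 ≤ X.ncard := by
      have ha0 : (0 : G ⧸ H) ≠ QuotientAddGroup.mk' H a :=
        fun h => haH ((QuotientAddGroup.eq_zero_iff a).1 h.symm)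
      rw [← Set.ncard_pair ha0]
      exact Set.ncard_le_ncard (Set.insert_subset hX0 (Set.singleton_subset_iff.2 ⟨a, ha, rfl⟩))
    have hgrow := hV.ncard_nsmul_ge hQ hX0 hXneg hX2 (k + 2)
    have hAX : A.ncard ≤ Nat.card H * X.ncard := by
      rw [← ncard_preimage_mk]
      exact Set.ncard_le_ncard fun x hx => ⟨x, hx, rfl⟩
    have hH := Nat.card_pos (α := H)
    rw [ncard_nsmul_add_two (add_add_addSubgroup_eq hG hneg hAH hA),
      AddSubgroup.card_eq_card_quotient_mul_card_addSubgroup H, mul_comm]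
    refine le_trans ?_ (Nat.mul_le_mul_left _ hgrow)
    rw [← Nat.mul_min_mul_left]
    refine min_le_min le_rfl ?_
    have h1 : 1 ≤ (k + 2) * (X.ncard + 1) := by nlinarith
    zify [h1, (by nlinarith : 1 ≤ (k + 2) * (A.ncard + 1))]
    nlinarith

end Growth

lemma card_mul_le_mul_sum_tsub_add {G : Type*} [AddCommGroup G] [Fintype G] [DecidableEq G]
    (B : Finset G) {A : Finset G} (h0 : (0 : G) ∈ A) {ℓ : ℕ} (hA : ∀ a ∈ A, lam B a ≤ ℓ)
    {K n : ℕ} (hn : n ≤ #(K • A)) :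
    n * #B ≤ ℓ * ∑ k ∈ range K, (n - #(k • A)) + #B * #B := by
  obtain ⟨T, -, rfl, hT⟩ := exists_card_eq_sum_le_mul_sum_tsub
    (fun _ _ hkl => nsmul_subset_nsmul_right h0 hkl) (lam_le_nsmul_of_forall_le B hA) hn
  grw [card_mul_le_sum_lam_add B T, hT]

theorem two_mul_card_mul_le_of_card_nsmul_ge {G : Type*} [AddCommGroup G] [Fintype G]
    [DecidableEq G] (B : Finset G) {A : Finset G} (h0 : (0 : G) ∈ A) {ℓ : ℕ}
    (hA : ∀ a ∈ A, lam B a ≤ ℓ) {m t r : ℕ} {q : ℤ}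
    (hgrowth : ∀ k, min (Fintype.card G) (k * m - 1) ≤ #(k • A)) (htG : t + 1 ≤ Fintype.card G)
    (ht : (t : ℤ) = r * m + q) (hq1 : -1 ≤ q) (hq2 : q + 2 ≤ m) :
    2 * m * (#B * (t + 1 - #B) : ℤ) ≤ ℓ * (t * (t + m + 4) + q * (m - 4 - q)) := by
  have hrm : t + 1 ≤ (r + 1) * m - 1 := by
    zify [(by nlinarith : 1 ≤ (r + 1) * m)]
    linarith
  have hkey := card_mul_le_mul_sum_tsub_add B h0 hA ((le_min htG hrm).trans (hgrowth (r + 1)))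
  have harith := two_mul_sum_range_tsub_le (c := fun k => #(k • A)) (by simp) hgrowth htG ht hq1
  zify at hkey
  push_cast at harith
  nlinarith [mul_le_mul_of_nonneg_left harith (Nat.cast_nonneg (α := ℤ) ℓ),
    mul_le_mul_of_nonneg_left hkey (by positivity : (0 : ℤ) ≤ 2 * m)]

section Symmetrization

variable {G : Type*} [AddCommGroup G] [DecidableEq G] {S : Finset G}

lemma neg_union_zero_union_neg : -(S ∪ {0} ∪ -S) = S ∪ {0} ∪ -S := by
  ext x
  simp only [mem_neg', mem_union, mem_singleton, neg_eq_zero, neg_neg]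
  tauto

lemma card_union_zero_union_neg (hS : S ∩ -S = ∅) : #(S ∪ {0} ∪ -S) = 2 * #S + 1 := by
  have h0 : (0 : G) ∉ S := fun h =>
    notMem_empty (0 : G) (hS ▸ mem_inter.2 ⟨h, by rwa [mem_neg', neg_zero]⟩)
  rw [card_union_of_disjoint, card_union_of_disjoint (disjoint_singleton_right.2 h0), card_neg,
    card_singleton]
  · ring
  · rw [disjoint_union_left, disjoint_singleton_left, mem_neg', neg_zero]
    exact ⟨disjoint_iff_inter_eq_empty.2 hS, h0⟩

lemma exists_mem_forall_lam_le (B : Finset G) (hS : S.Nonempty) :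
    ∃ x ∈ S, ∀ a ∈ S ∪ {0} ∪ -S, lam B a ≤ lam B x := by
  obtain ⟨x, hxS, hx⟩ := S.exists_max_image (lam B) hS
  refine ⟨x, hxS, ?_⟩
  simp only [mem_union, mem_singleton, mem_neg]
  rintro a ((ha | rfl) | ⟨a, ha, rfl⟩)
  exacts [hx a ha, by simp, lam_neg B a ▸ hx a ha]

theorem card_nsmul_union_zero_union_neg_ge [Fintype G] (hodd : Odd (Fintype.card G))
    (hgen : AddSubgroup.closure (S : Set G) = ⊤) (hS : S ∩ -S = ∅) {H : AddSubgroup G}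
    (hlt : ((↑(S ∪ {0} ∪ -S) : Set G) + H).ncard <
      min (Fintype.card G) (#(S ∪ {0} ∪ -S) + Nat.card H))
    (hV : IsVosper (QuotientAddGroup.mk' H '' ↑(S ∪ {0} ∪ -S))) (k : ℕ) :
    min (Fintype.card G) (k * (2 * #S + 2) - 1) ≤ #(k • (S ∪ {0} ∪ -S)) := by
  have h0 : (0 : G) ∈ S ∪ {0} ∪ -S := by simp
  have hH : ¬ (↑(S ∪ {0} ∪ -S) : Set G) ⊆ H := fun hsub => by
    have hH : H = ⊤ := top_unique <| hgen ▸ (AddSubgroup.closure_le H).2 fun a ha =>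
      hsub (by simp [mem_coe.1 ha])
    subst hH
    rw [AddSubgroup.coe_top, Set.add_univ_of_zero_mem (mem_coe.2 h0), Set.ncard_univ,
      Nat.card_eq_fintype_card] at hlt
    exact (hlt.trans_le (min_le_left _ _)).false
  have := ncard_nsmul_ge_of_isVosper_image (by rwa [Nat.card_eq_fintype_card]) h0
    (by rw [← coe_neg, neg_union_zero_union_neg]) hH
    (by rw [Set.ncard_coe_finset]; exact hlt.trans_le (min_le_right _ _)) hV k
  rwa [← coe_nsmul, Set.ncard_coe_finset, Set.ncard_coe_finset, Nat.card_eq_fintype_card,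
    card_union_zero_union_neg hS] at this

end Symmetrization

theorem stmt_8_general {G : Type*} [AddCommGroup G] [Fintype G] [DecidableEq G]
    (hodd : Odd (Fintype.card G))
    (B S : Finset G) (b s : ℕ)
    (hb : B.card = b)
    (hs : S.card = s) (hs3 : 3 ≤ s)
    (hgen : AddSubgroup.closure (S : Set G) = ⊤)
    (hdisj : S ∩ S.image (fun x => -x) = ∅)
    (hV : ∃ H : AddSubgroup G,
      ((↑(S ∪ {0} ∪ S.image (fun x => -x)) : Set G) + (H : Set G)).ncard <
        min (Fintype.card G) ((S ∪ {0} ∪ S.image (fun x => -x)).card + Nat.card H) ∧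
      IsVosper ((QuotientAddGroup.mk' H) '' (↑(S ∪ {0} ∪ S.image (fun x => -x)) : Set G)))
    (t r q : ℤ) (ht1 : 1 ≤ t) (ht2 : t ≤ (Fintype.card G : ℤ) - 1)
    (htrq : t = r * (2 * (s : ℤ) + 2) + q) (hq1 : -1 ≤ q) (hq2 : q ≤ 2 * (s : ℤ)) :
    ∃ x ∈ S,
      4 * ((s : ℚ) + 1) * (b : ℚ) * ((t : ℚ) - (b : ℚ) + 1) /
          ((t : ℚ) * ((t : ℚ) + 2 * (s : ℚ) + 6) + (q : ℚ) * (2 * (s : ℚ) - (q : ℚ) - 2))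
        ≤ (lam B x : ℚ) := by
  subst hb hs
  simp only [image_neg_eq_neg] at hdisj hV
  obtain ⟨H, hlt, hVos⟩ := hV
  obtain ⟨x, hxS, hx⟩ := exists_mem_forall_lam_le B (card_pos.1 (by omega : 0 < #S))
  lift t to ℕ using by omega
  lift r to ℕ using by nlinarith
  have hbound := two_mul_card_mul_le_of_card_nsmul_ge B (t := t) (r := r) (by simp) hx
    (card_nsmul_union_zero_union_neg_ge hodd hgen hdisj hlt hVos) (by omega)
    (by push_cast; linarith) hq1 (by push_cast; linarith)
  have hpos := two_mul_mul_le_of_eq_mul_add (m := 2 * #S + 2) htrq hq1 (by positivity)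
  push_cast at hbound hpos
  refine ⟨x, hxS, (div_le_iff₀ ?_).2 ?_⟩
  · exact_mod_cast (by nlinarith : (0 : ℤ) < t * (t + 2 * #S + 6) + q * (2 * #S - q - 2))
  · exact_mod_cast (by linarith : 4 * (#S + 1) * #B * (t - #B + 1 : ℤ) ≤
      lam B x * (t * (t + 2 * #S + 6) + q * (2 * #S - q - 2)))

theorem stmt_8 {G : Type*} [AddCommGroup G] [Fintype G] [DecidableEq G]
    (hodd : Odd (Fintype.card G))
    (B S : Finset G) (b s : ℕ)
    (hb : B.card = b) (hbG : 2 * b ≤ Fintype.card G)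
    (hs : S.card = s) (hs3 : 3 ≤ s)
    (hgen : AddSubgroup.closure (S : Set G) = ⊤)
    (hdisj : S ∩ S.image (fun x => -x) = ∅)
    (hV : ∃ H : AddSubgroup G,
      ((↑(S ∪ {0} ∪ S.image (fun x => -x)) : Set G) + (H : Set G)).ncard <
        min (Fintype.card G) ((S ∪ {0} ∪ S.image (fun x => -x)).card + Nat.card H) ∧
      IsVosper ((QuotientAddGroup.mk' H) '' (↑(S ∪ {0} ∪ S.image (fun x => -x)) : Set G)))
    (t r q : ℤ) (ht1 : 1 ≤ t) (ht2 : t ≤ (Fintype.card G : ℤ) - 1)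
    (htrq : t = r * (2 * (s : ℤ) + 2) + q) (hq1 : -1 ≤ q) (hq2 : q ≤ 2 * (s : ℤ)) :
    ∃ x ∈ S,
      4 * ((s : ℚ) + 1) * (b : ℚ) * ((t : ℚ) - (b : ℚ) + 1) /
          ((t : ℚ) * ((t : ℚ) + 2 * (s : ℚ) + 6) + (q : ℚ) * (2 * (s : ℚ) - (q : ℚ) - 2))
        ≤ (lam B x : ℚ) :=
  stmt_8_general hodd B S b s hb hs hs3 hgen hdisj hV t r q ht1 ht2 htrq hq1 hq2
end

section
/- Let G be a finite abelian group and let S ⊆ G be a subset with S ∩ (−S) = ∅. Then |Σ(S)| ≥ 2|S|. -/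
/-!
Induction on `|S|`. If removing some `a ∈ S` loses at least two subset sums, induct. Otherwise
every translate `Σ(S) + a`, `a ∈ S`, has at most one element outside `A = Σ(S)`, hence so does
`Σ(S) - a`. So for each `d` in `D = S ∪ -S` (a set of `2|S|` nonzero elements) all but at most
one `x ∈ A` have `x + d ∈ A`; the pairs `(x, x + d)` are distinct pairs of distinct elements of
`A`, whence `|D| (|A| - 1) ≤ |A| (|A| - 1)` and `2|S| = |D| ≤ |A|`.
-/

open Finset

/-- The set of all subset sums of a finset `S` (including the empty sum `0`). -/
def subsetSums {G : Type*} [AddCommGroup G] [DecidableEq G] (S : Finset G) : Finset G :=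
  S.powerset.image (fun T => T.sum id)

section

variable {G : Type*} [AddCommGroup G] [DecidableEq G]

lemma zero_notMem_of_disjoint_neg {S : Finset G} (hS : Disjoint S (S.image fun x => -x)) :
    (0 : G) ∉ S :=
  fun h0 => disjoint_left.1 hS h0 (mem_image.2 ⟨0, h0, neg_zero⟩)

lemma zero_mem_subsetSums (S : Finset G) : (0 : G) ∈ subsetSums S :=
  mem_image.2 ⟨∅, empty_mem_powerset S, sum_empty⟩

lemma mem_subsetSums_of_mem {S : Finset G} {a : G} (ha : a ∈ S) : a ∈ subsetSums S :=
  mem_image.2 ⟨{a}, singleton_subset_iff.2 ha |> mem_powerset.2, sum_singleton id a⟩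

lemma subsetSums_insert {S : Finset G} {a : G} (ha : a ∉ S) :
    subsetSums (insert a S) = subsetSums S ∪ (subsetSums S).image (· + a) := by
  have hsum : ∀ T ∈ S.powerset, (insert a T).sum id = T.sum id + a := fun T hT => by
    rw [sum_insert fun h => ha (mem_powerset.1 hT h), add_comm, id]
  simp only [subsetSums, powerset_insert, image_union, image_image]
  exact congrArg _ (image_congr fun T hT => hsum T (mem_coe.1 hT))

lemma card_filter_add_notMem (A : Finset G) (d : G) :
    #{x ∈ A | x + d ∉ A} = #(A.image (· + d) \ A) := by
  refine card_nbij (· + d) (fun x hx => ?_) (fun x _ y _ h => add_right_cancel h) ?_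
  · simp only [coe_filter, Set.mem_ofPred_eq] at hx
    exact mem_coe.2 (mem_sdiff.2 ⟨mem_image_of_mem _ hx.1, hx.2⟩)
  · intro y hy
    simp only [coe_sdiff, coe_image, Set.mem_sdiff, Set.mem_image, mem_coe] at hy
    obtain ⟨⟨x, hx, rfl⟩, hxd⟩ := hy
    exact ⟨x, by simpa using ⟨hx, hxd⟩, rfl⟩

lemma card_filter_sub_notMem (A : Finset G) (d : G) :
    #{x ∈ A | x - d ∉ A} = #(A.image (· + d) \ A) := by
  have hfilter : {x ∈ A | x - d ∉ A} = A \ A.image (· + d) := by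
    ext x
    simp [sub_eq_add_neg]
  rw [hfilter, card_sdiff_comm (card_image_of_injective A (add_left_injective d)).symm]

/-- Translating `B ∪ (B + a)` by `a` creates no more new elements than translating `B` did. -/
lemma card_image_add_sdiff_union_le (B : Finset G) (a : G) :
    #((B ∪ B.image (· + a)).image (· + a) \ (B ∪ B.image (· + a))) ≤
      #(B ∪ B.image (· + a)) - #B := by
  set A := B ∪ B.image (· + a)
  have hsub : A.image (· + a) \ A ⊆ (B.image (· + a) \ B).image (· + a) := by
    intro y hy
    obtain ⟨hyA, hyn⟩ := mem_sdiff.1 hy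
    obtain ⟨x, hx, rfl⟩ := mem_image.1 hyA
    have hxB : x ∉ B := fun hxB => hyn (mem_union_right _ (mem_image_of_mem _ hxB))
    have hxBa : x ∈ B.image (· + a) := (mem_union.1 hx).resolve_left hxB
    exact mem_image_of_mem _ (mem_sdiff.2 ⟨hxBa, hxB⟩)
  calc #(A.image (· + a) \ A) ≤ #((B.image (· + a) \ B).image (· + a)) := card_le_card hsub
    _ ≤ #(B.image (· + a) \ B) := card_image_le
    _ = #A - #B := by
      have := card_sdiff_add_card (B.image (· + a)) B
      rw [union_comm] at this
      exact Nat.eq_sub_of_add_eq this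

lemma card_le_of_forall_card_filter_add_notMem_le_one {A D : Finset G} (hA : 2 ≤ #A)
    (hD : (0 : G) ∉ D) (h : ∀ d ∈ D, #{x ∈ A | x + d ∉ A} ≤ 1) : #D ≤ #A := by
  have hcount : #D • (#A - 1) ≤ #A • (#A - 1) := by
    refine card_nsmul_le_card_nsmul (fun d x => x + d ∈ A) (fun d hd => ?_) (fun x hx => ?_)
    · have hsplit := card_filter_add_card_filter_not (s := A) (fun x => x + d ∈ A)
      have hd1 := h d hd
      simp only [bipartiteAbove, Nat.cast_id]
      omega
    · rw [← card_erase_of_mem hx]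
      refine card_le_card_of_injOn (x + ·) (fun d hd => ?_) (fun d _ e _ h => add_left_cancel h)
      simp only [bipartiteBelow, coe_filter, Set.mem_ofPred_eq] at hd
      refine mem_coe.2 (mem_erase.2 ⟨fun hxd => hD ?_, hd.2⟩)
      exact add_eq_left.1 hxd ▸ hd.1
  simp only [smul_eq_mul] at hcount
  exact Nat.le_of_mul_le_mul_right hcount (by omega)

lemma two_mul_card_le_of_forall_card_image_add_sdiff_le_one {A S : Finset G} (hA : 2 ≤ #A)
    (hS : Disjoint S (S.image fun x => -x)) (h : ∀ a ∈ S, #(A.image (· + a) \ A) ≤ 1) :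
    2 * #S ≤ #A := by
  have hcard : #(S ∪ S.image fun x => -x) = 2 * #S := by
    rw [card_union_of_disjoint hS, card_image_of_injective _ neg_injective, two_mul]
  rw [← hcard]
  refine card_le_of_forall_card_filter_add_notMem_le_one hA ?_ fun d hd => ?_
  · simpa using zero_notMem_of_disjoint_neg hS
  rcases mem_union.1 hd with hd | hd
  · exact card_filter_add_notMem A d ▸ h d hd
  · obtain ⟨a, ha, rfl⟩ := mem_image.1 hd
    simpa only [← sub_eq_add_neg, card_filter_sub_notMem] using h a ha

end

theorem stmt_9_general {G : Type*} [AddCommGroup G] [DecidableEq G] (S : Finset G)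
    (hdisj : S ∩ S.image (fun x => -x) = ∅) :
    2 * S.card ≤ (subsetSums S).card := by
  induction S using Finset.strongInduction with
  | H S ih =>
  have hS : Disjoint S (S.image fun x => -x) := disjoint_iff_inter_eq_empty.2 hdisj
  rcases S.eq_empty_or_nonempty with rfl | ⟨a₀, ha₀⟩
  · simp
  by_cases hgrow : ∃ a ∈ S, #(subsetSums (S.erase a)) + 2 ≤ #(subsetSums S)
  · obtain ⟨a, ha, hle⟩ := hgrow
    have hS' : Disjoint (S.erase a) ((S.erase a).image fun x => -x) :=
      hS.mono (erase_subset a S) (image_subset_image (erase_subset a S))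
    have hih := ih (S.erase a) (erase_ssubset ha) (disjoint_iff_inter_eq_empty.1 hS')
    have hcard := card_erase_add_one ha
    omega
  push Not at hgrow
  have hA : 2 ≤ #(subsetSums S) := one_lt_card.2 ⟨0, zero_mem_subsetSums S, a₀,
    mem_subsetSums_of_mem ha₀, fun h => zero_notMem_of_disjoint_neg hS (h ▸ ha₀)⟩
  refine two_mul_card_le_of_forall_card_image_add_sdiff_le_one hA hS fun a ha => ?_
  have hsplit := subsetSums_insert (notMem_erase a S)
  rw [insert_erase ha] at hsplit
  have hslow := hgrow a ha
  have hnew := card_image_add_sdiff_union_le (subsetSums (S.erase a)) a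
  rw [← hsplit] at hnew
  omega

theorem stmt_9 {G : Type*} [AddCommGroup G] [Fintype G] [DecidableEq G] (S : Finset G)
    (hdisj : S ∩ S.image (fun x => -x) = ∅) :
    2 * S.card ≤ (subsetSums S).card :=
  stmt_9_general S hdisj
end

section
/- Let G be a finite abelian group and let B, C be non-empty subsets of G with 0 ∉ C. Then Σ_{x ∈ C} λ_B(x) ≥ |B|·(|C| − |B| + 1). -/
/-!
The overlap `|(B + x) ∩ B| = |B| - λ_B(x)` counts the pairs `(a, b) ∈ B × B` with `b - a = x`,
so the overlaps sum to `|B|²` over all of `G`. The overlap at `x = 0` alone is `|B|`,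
hence the overlaps over `C ⊆ G \ {0}` sum to at most `|B|² - |B|`, which is the claim.
-/

open Finset

section

variable {G : Type*} [AddCommGroup G] [DecidableEq G]

theorem lam_add_card_image_add_inter (B : Finset G) (x : G) :
    lam B x + #(B.image (· + x) ∩ B) = #B := by
  rw [lam, card_sdiff_add_card_inter, card_image_of_injective _ (add_left_injective x)]

theorem card_image_add_inter_eq_card_filter_sub (B : Finset G) (x : G) :
    #(B.image (· + x) ∩ B) = #{p ∈ B ×ˢ B | p.2 - p.1 = x} := by
  refine card_nbij' (fun b ↦ (b - x, b)) Prod.snd ?_ ?_ (fun _ _ ↦ rfl) ?_ <;>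
    simp only [coe_inter, coe_image, coe_filter, mem_product]
  · rintro b ⟨⟨a, ha, rfl⟩, hb⟩
    simpa using ⟨ha, hb⟩
  · rintro ⟨a, b⟩ ⟨⟨ha, hb⟩, rfl⟩
    exact ⟨⟨a, ha, add_sub_cancel a b⟩, hb⟩
  · rintro ⟨a, b⟩ ⟨-, rfl⟩
    simp

theorem sum_card_image_add_inter [Fintype G] (B : Finset G) :
    ∑ x, #(B.image (· + x) ∩ B) = #B * #B := by
  simp_rw [card_image_add_inter_eq_card_filter_sub, ← card_product]
  exact (card_eq_sum_card_fiberwise fun _ _ ↦ mem_coe.mpr (mem_univ _)).symm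

theorem sum_card_image_add_inter_add_card_le [Fintype G] (B C : Finset G) (h0 : 0 ∉ C) :
    ∑ x ∈ C, #(B.image (· + x) ∩ B) + #B ≤ #B * #B := by
  have hC : C ⊆ univ.erase 0 := fun x hx ↦ mem_erase.mpr ⟨ne_of_mem_of_not_mem hx h0, mem_univ x⟩
  calc ∑ x ∈ C, #(B.image (· + x) ∩ B) + #B
      ≤ ∑ x ∈ univ.erase 0, #(B.image (· + x) ∩ B) + #(B.image (· + 0) ∩ B) := by
        gcongr
        simp only [add_zero, image_id', inter_self, le_refl]
    _ = #B * #B := by rw [sum_erase_add _ _ (mem_univ 0), sum_card_image_add_inter]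

end

theorem stmt_11_general {G : Type*} [AddCommGroup G] [Fintype G] [DecidableEq G] (B C : Finset G)
    (h0 : 0 ∉ C) :
    (B.card : ℤ) * ((C.card : ℤ) - (B.card : ℤ) + 1) ≤ ∑ x ∈ C, (lam B x : ℤ) := by
  have hlam : ∀ x, (lam B x : ℤ) = #B - #(B.image (· + x) ∩ B) := fun x ↦ by
    rw [← lam_add_card_image_add_inter B x]
    push_cast
    ring
  have hle : ((∑ x ∈ C, #(B.image (· + x) ∩ B) + #B : ℕ) : ℤ) ≤ (#B * #B : ℕ) := by
    exact_mod_cast sum_card_image_add_inter_add_card_le B C h0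
  simp only [hlam, sum_sub_distrib, sum_const, nsmul_eq_mul]
  push_cast at hle
  linarith

theorem stmt_11 {G : Type*} [AddCommGroup G] [Fintype G] [DecidableEq G] (B C : Finset G)
    (hB : B.Nonempty) (hC : C.Nonempty) (h0 : 0 ∉ C) :
    (B.card : ℤ) * ((C.card : ℤ) - (B.card : ℤ) + 1) ≤ ∑ x ∈ C, (lam B x : ℤ) :=
  stmt_11_general B C h0
end

section
/- Let G be a finite abelian group, let S ⊆ G be a generating subset, set Ŝ = S ∪ {0} ∪ (−S), and let H be a subgroup of G with |Ŝ + H| < min(|G|, |Ŝ| + |H|). Then the sumset 2Ŝ = Ŝ + Ŝ is H-periodic, i.e., Ŝ + Ŝ + H = Ŝ + Ŝ. -/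
/-!
Let `T = Ŝ` and, for a coset `q` of `H`, `T_q = T ∩ q`. As `T + H` is the union of the cosets
met by `T`, the hypothesis `|T + H| < |T| + |H|` forces `|T_p| + |T_q| > |H|` for any two
distinct cosets `p, q` met by `T`, and by pigeonhole such a pair gives `T_p + T_q = p + q`. So each coset `p + q` of
`T + T + H` must be written as `p' + q'` with `|T_p'| + |T_q'| > |H|`: distinct `p, q` work directly;
if `p = q` and `2p ≠ 0`, compare `p` with `-p` and use `|T_{-p}| = |T_p|`; the coset `H` itself is
reached through `(0, 0)` or `(c, -c)` for some `c ∈ T \ H`, which exists because `T` generates `G`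
while `|T + H| < |G|`.
-/

open Finset Pointwise

section CosetFibers

variable {G : Type*} [AddCommGroup G] (H : AddSubgroup G) [DecidableEq (G ⧸ H)]

def cosetFiber (T : Finset G) (q : G ⧸ H) : Finset G := {t ∈ T | ((t : G) : G ⧸ H) = q}

variable {H}

@[simp]
theorem mem_cosetFiber {T : Finset G} {q : G ⧸ H} {t : G} :
    t ∈ cosetFiber H T q ↔ t ∈ T ∧ (t : G ⧸ H) = q :=
  mem_filter

theorem cosetFiber_mono {A B : Finset G} (h : A ⊆ B) (q : G ⧸ H) :
    cosetFiber H A q ⊆ cosetFiber H B q :=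
  filter_subset_filter _ h

theorem card_cosetFiber_univ [Fintype G] (q : G ⧸ H) : #(cosetFiber H univ q) = Nat.card H := by
  have hpre : (cosetFiber H univ q : Set G) = QuotientAddGroup.mk ⁻¹' {q} := by ext; simp
  rw [← Set.ncard_coe_finset, hpre, ← Nat.card_coe_set_eq,
    Nat.card_congr (QuotientAddGroup.preimageMkEquivAddSubgroupProdSet H {q}), Nat.card_prod]
  simp

variable [DecidableEq G] {T : Finset G}

theorem card_cosetFiber_neg (hT : -T = T) (q : G ⧸ H) :
    #(cosetFiber H T (-q)) = #(cosetFiber H T q) := by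
  refine card_nbij' Neg.neg Neg.neg (fun t ht => ?_) (fun t ht => ?_) (fun t _ => neg_neg t)
    (fun t _ => neg_neg t)
  all_goals
    simp only [mem_coe, mem_cosetFiber, QuotientAddGroup.mk_neg] at ht ⊢
    exact ⟨hT ▸ neg_mem_neg ht.1, by simp [ht.2]⟩

variable [Fintype G]

theorem mem_add_of_card_lt_card_cosetFiber_add {A B : Finset G} {x : G} {q r : G ⧸ H}
    (hx : (x : G ⧸ H) = q + r)
    (hcard : Nat.card H < #(cosetFiber H A q) + #(cosetFiber H B r)) :
    x ∈ (A : Set G) + B := by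
  set B' := (cosetFiber H B r).image (x - ·)
  have hB'card : #B' = #(cosetFiber H B r) := card_image_of_injective _ sub_right_injective
  have hB'sub : B' ⊆ cosetFiber H univ q := by
    simp only [B', image_subset_iff, mem_cosetFiber]
    intro b hb
    simp [hx, hb.2]
  obtain ⟨a, ha⟩ := inter_nonempty_of_card_lt_card_add_card
    (cosetFiber_mono (subset_univ A) q) hB'sub (by rwa [card_cosetFiber_univ, hB'card])
  simp only [B', mem_inter, mem_cosetFiber, mem_image] at ha
  obtain ⟨⟨haA, -⟩, b, ⟨hbB, -⟩, rfl⟩ := ha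
  exact ⟨x - b, haA, b, hbB, sub_add_cancel x b⟩

theorem card_lt_card_cosetFiber_add_of_ne (hT : ((T : Set G) + H).ncard < #T + Nat.card H)
    {c₁ c₂ : G} (hc₁ : c₁ ∈ T) (hc₂ : c₂ ∈ T) (hne : (c₁ : G ⧸ H) ≠ c₂) :
    Nat.card H < #(cosetFiber H T c₁) + #(cosetFiber H T c₂) := by
  set C := cosetFiber H univ (c₁ : G ⧸ H) ∪ cosetFiber H univ (c₂ : G ⧸ H)
  have hCcard : #C = Nat.card H + Nat.card H := by
    rw [card_union_of_disjoint, card_cosetFiber_univ, card_cosetFiber_univ]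
    exact disjoint_filter.2 fun g _ h₁ h₂ => hne (h₁.symm.trans h₂)
  have hCT : #(C ∩ T) ≤ #(cosetFiber H T c₁) + #(cosetFiber H T c₂) := by
    refine (card_le_card fun g hg => ?_).trans (card_union_le _ _)
    simp only [C, mem_inter, mem_union, mem_cosetFiber] at hg ⊢
    tauto
  have hCT_sub : ((C ∪ T : Finset G) : Set G) ⊆ T + H := by
    intro g hg
    simp only [C, coe_union, Set.mem_union, mem_coe, mem_cosetFiber] at hg
    rcases hg with (⟨-, hg⟩ | ⟨-, hg⟩) | hg
    · exact ⟨c₁, hc₁, -c₁ + g, QuotientAddGroup.eq.1 hg.symm, add_neg_cancel_left c₁ g⟩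
    · exact ⟨c₂, hc₂, -c₂ + g, QuotientAddGroup.eq.1 hg.symm, add_neg_cancel_left c₂ g⟩
    · exact Set.subset_add_left _ H.zero_mem hg
  have hCT_card := Set.ncard_le_ncard hCT_sub (Set.toFinite _)
  rw [Set.ncard_coe_finset] at hCT_card
  have := card_union_add_card_inter C T
  omega

theorem exists_card_lt_card_cosetFiber_add_of_add_eq_zero (hT0 : (0 : G) ∈ T) (hTneg : -T = T)
    (hTH : ((T : Set G) + H).ncard < #T + Nat.card H) {c : G} (hc : c ∈ T) (hcH : c ∉ H) :
    ∃ a ∈ T, ∃ b ∈ T, (a : G ⧸ H) + b = 0 ∧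
      Nat.card H < #(cosetFiber H T a) + #(cosetFiber H T b) := by
  have hc0 : (c : G ⧸ H) ≠ ((0 : G) : G ⧸ H) := by
    simpa [QuotientAddGroup.eq_zero_iff] using hcH
  have key := card_lt_card_cosetFiber_add_of_ne hTH hc hT0 hc0
  rcases le_total #(cosetFiber H T c) #(cosetFiber H T ((0 : G) : G ⧸ H)) with h | h
  · exact ⟨0, hT0, 0, hT0, by simp, by omega⟩
  · refine ⟨c, hc, -c, hTneg ▸ neg_mem_neg hc, by simp, ?_⟩
    rw [QuotientAddGroup.mk_neg, card_cosetFiber_neg hTneg]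
    omega

theorem card_lt_card_cosetFiber_add_of_add_ne_zero (hTneg : -T = T)
    (hTH : ((T : Set G) + H).ncard < #T + Nat.card H) {s s' : G} (hs : s ∈ T) (hs' : s' ∈ T)
    (h : (s : G ⧸ H) + s' ≠ 0) :
    Nat.card H < #(cosetFiber H T s) + #(cosetFiber H T s') := by
  by_cases hss' : (s : G ⧸ H) = s'
  · have hne : (s : G ⧸ H) ≠ ↑(-s) := by
      rw [QuotientAddGroup.mk_neg]
      exact fun h' => h (hss' ▸ eq_neg_iff_add_eq_zero.1 h')
    have key := card_lt_card_cosetFiber_add_of_ne hTH hs (hTneg ▸ neg_mem_neg hs) hne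
    rw [QuotientAddGroup.mk_neg, card_cosetFiber_neg hTneg] at key
    rwa [← hss']
  · exact card_lt_card_cosetFiber_add_of_ne hTH hs hs' hss'

end CosetFibers

theorem add_self_add_addSubgroup_eq_of_ncard_lt {G : Type*} [AddCommGroup G] [Fintype G]
    [DecidableEq G] {H : AddSubgroup G} {T : Finset G} (hT0 : (0 : G) ∈ T) (hTneg : -T = T)
    (hgen : AddSubgroup.closure (T : Set G) = ⊤)
    (hTG : ((T : Set G) + H).ncard < Fintype.card G)
    (hTH : ((T : Set G) + H).ncard < #T + Nat.card H) :
    (T : Set G) + T + H = T + T := by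
  classical
  have hH : H ≠ ⊤ := by
    rintro rfl
    simp [Set.add_univ ⟨0, hT0⟩] at hTG
  obtain ⟨c, hcT, hcH⟩ : ∃ c ∈ T, c ∉ H := by
    by_contra! h
    exact hH (eq_top_iff.2 (hgen ▸ (AddSubgroup.closure_le H).2 h))
  refine subset_antisymm ?_ (Set.subset_add_left _ H.zero_mem)
  rintro _ ⟨_, ⟨s, hs, s', hs', rfl⟩, h, hh, rfl⟩
  obtain ⟨a, ha, b, hb, hab, hcard⟩ : ∃ a ∈ T, ∃ b ∈ T, (a : G ⧸ H) + b = s + s' ∧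
      Nat.card H < #(cosetFiber H T a) + #(cosetFiber H T b) := by
    by_cases h0 : (s : G ⧸ H) + s' = 0
    · rw [h0]
      exact exists_card_lt_card_cosetFiber_add_of_add_eq_zero hT0 hTneg hTH hcT hcH
    · exact ⟨s, hs, s', hs', rfl, card_lt_card_cosetFiber_add_of_add_ne_zero hTneg hTH hs hs' h0⟩
  refine mem_add_of_card_lt_card_cosetFiber_add ?_ hcard
  rw [QuotientAddGroup.mk_add, (QuotientAddGroup.eq_zero_iff h).2 hh, add_zero, hab]
  rfl

theorem stmt_16 {G : Type*} [AddCommGroup G] [Fintype G] [DecidableEq G] (S : Finset G)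
    (hgen : AddSubgroup.closure (S : Set G) = ⊤)
    (H : AddSubgroup G)
    (hH : ((↑(S ∪ {0} ∪ S.image (fun x => -x)) : Set G) + (H : Set G)).ncard <
        min (Fintype.card G) ((S ∪ {0} ∪ S.image (fun x => -x)).card + Nat.card H)) :
    (↑(S ∪ {0} ∪ S.image (fun x => -x)) : Set G) + (↑(S ∪ {0} ∪ S.image (fun x => -x)) : Set G)
        + (H : Set G)
      = (↑(S ∪ {0} ∪ S.image (fun x => -x)) : Set G)
        + (↑(S ∪ {0} ∪ S.image (fun x => -x)) : Set G) := by
  set T := S ∪ {0} ∪ S.image (fun x => -x)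
  have hTneg : -T = T := by
    ext x
    simp only [T, mem_neg', mem_union, mem_singleton, mem_image, neg_eq_iff_eq_neg, neg_neg,
      exists_eq_right, neg_zero]
    tauto
  have hST : S ⊆ T := subset_union_left.trans subset_union_left
  have hgenT : AddSubgroup.closure (T : Set G) = ⊤ :=
    top_le_iff.1 (hgen ▸ AddSubgroup.closure_mono (coe_subset.2 hST))
  exact add_self_add_addSubgroup_eq_of_ncard_lt (by simp [T]) hTneg hgenT
    (hH.trans_le (min_le_left _ _)) (hH.trans_le (min_le_right _ _))
end

section
/- Let G be a finite abelian group of odd order and let S ⊆ G be a generating subset such that Ŝ = S ∪ {0} ∪ (−S) has a Vosper-representation, i.e., there exists a subgroup H of G with |Ŝ + H| < min(|G|, |Ŝ| + |H|) such that the image of Ŝ under the canonical map φ : G → G/H is a Vosper subset of G/H. Then S is super faithful, i.e., for every integer j ≥ 1, |jŜ| ≥ min(|G|, j(|Ŝ| + 1) − 1), where jŜ denotes the j-fold sumset Ŝ + ⋯ + Ŝ. -/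
/-!
Write `T = Ŝ`, `π : G → G ⧸ H` and `X = π T`. The iterated sumsets of `X` are symmetric and
contain `0` in a group of odd order, so their sizes are odd; hence each application of the Vosper
bound to `X + jX` gains one more element than it states, and `|jX| ≥ min |G ⧸ H| (j (|X| + 1) - 1)`.
The hypothesis `|T + H| < |T| + |H|` says that `T` misses fewer than `|H|` points of `T + H`, so
two distinct fibres of `T` over `X` have more than `|H|` points together and, by pigeonhole, their
sum is a whole coset. Symmetry handles equal fibres, so `T + T`, and then every `jT` with `j ≥ 2`,
is the full preimage of `jX`. Thus `|jT| = |H| |jX|`, which gives the bound.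
-/

open Finset Pointwise

/-- The `j`-fold sumset `S + ⋯ + S` (with `0`-fold sumset `{0}`). -/
def iterSumset {G : Type*} [AddCommGroup G] [DecidableEq G] (S : Finset G) : ℕ → Finset G
  | 0 => {0}
  | n + 1 => iterSumset S n + S

theorem iterSumset_eq_nsmul {G : Type*} [AddCommGroup G] [DecidableEq G] (S : Finset G) :
    ∀ n, iterSumset S n = n • S
  | 0 => by rw [zero_nsmul]; rfl
  | n + 1 => by rw [iterSumset, iterSumset_eq_nsmul S n, succ_nsmul]

section OddOrder

variable {Q : Type*} [AddCommGroup Q]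

theorem eq_zero_of_neg_eq_self_of_odd_card (hodd : Odd (Nat.card Q)) {g : Q} (hg : -g = g) :
    g = 0 := by
  have h2 : addOrderOf g ∣ 2 :=
    addOrderOf_dvd_of_nsmul_eq_zero (by rw [two_nsmul]; nth_rw 1 [← hg]; exact neg_add_cancel g)
  rcases (Nat.dvd_prime Nat.prime_two).mp h2 with h | h
  · exact AddMonoid.addOrderOf_eq_one_iff.mp h
  · exact absurd (hodd.of_dvd_nat (h ▸ addOrderOf_dvd_natCard g)) (by decide)

theorem odd_card_of_neg_eq_self [DecidableEq Q] (hodd : Odd (Nat.card Q)) {s : Finset Q}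
    (h0 : 0 ∈ s) (hs : -s = s) : Odd #s := by
  have heven : ((#(s.erase 0) : ℕ) : ZMod 2) = 0 := by
    rw [card_eq_sum_ones, Nat.cast_sum]
    refine sum_involution (fun a _ => -a) (fun _ _ => by decide)
      (fun a ha _ h => (mem_erase.mp ha).1 (eq_zero_of_neg_eq_self_of_odd_card hodd h))
      (fun a ha => ?_) (fun a _ => neg_neg a)
    obtain ⟨ha0, has⟩ := mem_erase.mp ha
    exact mem_erase.mpr ⟨neg_ne_zero.mpr ha0, hs ▸ neg_mem_neg has⟩
  rw [← card_erase_add_one h0]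
  exact (ZMod.natCast_eq_zero_iff_even.mp heven).add_one

theorem IsVosper.min_card_le_card_nsmul [Fintype Q] [DecidableEq Q] (hodd : Odd (Nat.card Q))
    {X : Finset Q} (hV : IsVosper (X : Set Q)) (h0 : 0 ∈ X) (hX : -X = X) (h2 : 2 ≤ #X) :
    ∀ j, 1 ≤ j → min (Nat.card Q) (j * (#X + 1) - 1) ≤ #(j • X) := by
  have hodd_nsmul (n : ℕ) : Odd #(n • X) :=
    odd_card_of_neg_eq_self hodd (zero_mem_nsmul h0) (by rw [← neg_nsmul, hX])
  intro j hj
  induction j, hj using Nat.le_induction with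
  | base => simp
  | succ n hn ih =>
    have hY : 2 ≤ #(n • X) := h2.trans (card_le_card (subset_nsmul h0 (by omega)))
    have hstep := hV (n • X : Finset Q) (by rwa [Set.ncard_coe_finset])
    rw [← coe_add, Set.ncard_coe_finset, Set.ncard_coe_finset, Set.ncard_coe_finset, add_comm X,
      ← succ_nsmul] at hstep
    have hle : #((n + 1) • X) ≤ Nat.card Q := by
      rw [Nat.card_eq_fintype_card]; exact card_le_univ _
    have hpos : 1 ≤ n * (#X + 1) := Nat.one_le_iff_ne_zero.mpr (by positivity)
    rw [add_one_mul]
    generalize n * (#X + 1) = B at ih hpos ⊢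
    -- all four cardinalities are odd, so Vosper's bound improves by one
    obtain ⟨a, ha⟩ := hodd
    obtain ⟨b, hb⟩ := hodd_nsmul 1
    obtain ⟨c, hc⟩ := hodd_nsmul n
    obtain ⟨d, hd⟩ := hodd_nsmul (n + 1)
    rw [one_nsmul] at hb
    omega

end OddOrder

theorem neg_union_zero_union_image_neg {G : Type*} [AddCommGroup G] [DecidableEq G]
    (S : Finset G) :
    -(S ∪ {0} ∪ S.image (fun x => -x)) = S ∪ {0} ∪ S.image (fun x => -x) := by
  ext x
  simp only [mem_neg', mem_union, mem_singleton, mem_image, neg_eq_iff_eq_neg, exists_eq_right,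
    neg_zero, neg_neg]
  tauto

theorem mul_add_one_sub_one_le {j t h x : ℕ} (hj : 1 ≤ j) (hh : 1 ≤ h) (htx : t ≤ h * x) :
    j * (t + 1) - 1 ≤ h * (j * (x + 1) - 1) := by
  obtain ⟨m, rfl⟩ := Nat.exists_eq_add_of_le hj
  have ht : (1 + m) * (t + 1) - 1 = (1 + m) * t + m := by ring_nf; omega
  have hx : (1 + m) * (x + 1) - 1 = (1 + m) * x + m := by ring_nf; omega
  rw [ht, hx]
  nlinarith

section Quotient

variable {G : Type*} [AddCommGroup G] {H : AddSubgroup G}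

theorem exists_mem_mk'_ne_zero {S : Set G} (hgen : AddSubgroup.closure S = ⊤) (hH : H ≠ ⊤) :
    ∃ s ∈ S, QuotientAddGroup.mk' H s ≠ 0 := by
  by_contra! h
  refine hH (eq_top_iff.mpr (hgen ▸ (AddSubgroup.closure_le H).mpr fun s hs => ?_))
  exact (QuotientAddGroup.eq_zero_iff s).mp (h s hs)

theorem ne_top_of_ncard_add_lt {T : Set G} (hT : T.Nonempty)
    (hlt : (T + (H : Set G)).ncard < Nat.card G) : H ≠ ⊤ := by
  rintro rfl
  rw [AddSubgroup.coe_top, Set.add_univ hT, Set.ncard_univ] at hlt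
  exact lt_irrefl _ hlt

variable [DecidableEq (G ⧸ H)]

local notation "π" => QuotientAddGroup.mk' H

theorem ncard_add_addSubgroup (T : Finset G) :
    ((T : Set G) + H).ncard = Nat.card H * #(T.image π) := by
  have himage : QuotientAddGroup.mk '' (T : Set G) = (T.image π : Set (G ⧸ H)) := by
    rw [coe_image]; rfl
  rw [← Nat.card_coe_set_eq, AddSubgroup.card_add_eq_card_addSubgroup_add_card_quotient, himage,
    Nat.card_coe_set_eq, Set.ncard_coe_finset]

theorem card_fibre_neg [DecidableEq G] {T : Finset G} (hT : -T = T) (ξ : G ⧸ H) :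
    #{t ∈ T | π t = -ξ} = #{t ∈ T | π t = ξ} := by
  rw [← card_neg {t ∈ T | π t = ξ}]
  congr 1
  ext x
  rw [mem_neg', mem_filter, mem_filter, ← mem_neg', hT, map_neg, neg_eq_iff_eq_neg]

theorem neg_image_mk'_eq [DecidableEq G] {T : Finset G} (hT : -T = T) :
    -T.image π = T.image π := by
  rw [← image_neg_eq_neg, image_image]
  conv_rhs => rw [← hT, ← image_neg_eq_neg, image_image]
  simp [Function.comp_def]

variable [Fintype G]

theorem card_filter_mk'_mem (Y : Finset (G ⧸ H)) :
    #{g | π g ∈ Y} = Nat.card H * #Y := by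
  rw [← Fintype.card_subtype, ← Nat.card_eq_fintype_card,
    ← Set.ncard_coe_finset Y, ← Nat.card_coe_set_eq, ← Nat.card_prod]
  exact Nat.card_congr (QuotientAddGroup.preimageMkEquivAddSubgroupProdSet H Y)

theorem card_le_mul_card_image (T : Finset G) : #T ≤ Nat.card H * #(T.image π) :=
  card_filter_mk'_mem (T.image π) ▸ card_le_card fun t ht => by
    simpa using mem_image_of_mem π ht

theorem card_fibre_le (T : Finset G) (ξ : G ⧸ H) : #{t ∈ T | π t = ξ} ≤ Nat.card H := by
  have hsub : {t ∈ T | π t = ξ} ⊆ univ.filter (π · ∈ ({ξ} : Finset (G ⧸ H))) := fun t ht => by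
    simpa using (mem_filter.mp ht).2
  exact (card_le_card hsub).trans (by rw [card_filter_mk'_mem, card_singleton, mul_one])

theorem lt_card_fibre_add_card_fibre {T : Finset G}
    (hT : ((T : Set G) + H).ncard < #T + Nat.card H) {ξ η : G ⧸ H}
    (hξ : ξ ∈ T.image π) (hη : η ∈ T.image π) (hne : ξ ≠ η) :
    Nat.card H < #{t ∈ T | π t = ξ} + #{t ∈ T | π t = η} := by
  set X := T.image π
  have hpair : {ξ, η} ⊆ X := insert_subset hξ (singleton_subset_iff.mpr hη)
  have hsum : #T = ∑ ζ ∈ X \ {ξ, η}, #{t ∈ T | π t = ζ} +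
      (#{t ∈ T | π t = ξ} + #{t ∈ T | π t = η}) := by
    rw [card_eq_sum_card_image π T, ← sum_sdiff hpair, sum_pair hne]
  have hrest : ∑ ζ ∈ X \ {ξ, η}, #{t ∈ T | π t = ζ} ≤ (#X - 2) * Nat.card H := by
    refine (sum_le_card_nsmul _ _ _ fun ζ _ => card_fibre_le T ζ).trans ?_
    rw [card_sdiff_of_subset hpair, card_pair hne, smul_eq_mul]
  have hX : 2 ≤ #X := card_pair hne ▸ card_le_card hpair
  rw [ncard_add_addSubgroup] at hT
  obtain ⟨k, hk⟩ := Nat.exists_eq_add_of_le hX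
  rw [hk, Nat.add_sub_cancel_left] at hrest
  rw [hk] at hT
  nlinarith

variable [DecidableEq G] {T : Finset G}

theorem mem_add_of_lt_card_add_card {A B : Finset G} {ξ η : G ⧸ H}
    (hA : ∀ a ∈ A, π a = ξ) (hB : ∀ b ∈ B, π b = η) (hAB : Nat.card H < #A + #B) {g : G}
    (hg : π g = ξ + η) : g ∈ A + B := by
  set F : Finset G := {x | π x ∈ ({ξ} : Finset (G ⧸ H))}
  have hAF : A ⊆ F := fun a ha => by simpa [F] using hA a ha
  have hBF : B.image (g - ·) ⊆ F := by
    intro x hx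
    obtain ⟨b, hb, rfl⟩ := mem_image.mp hx
    simp only [F, mem_filter, mem_univ, mem_singleton, true_and, map_sub, hg, hB b hb,
      add_sub_cancel_right]
  have hcard : #F < #A + #(B.image (g - ·)) := by
    rwa [card_filter_mk'_mem, card_singleton, mul_one,
      card_image_of_injective _ sub_right_injective]
  obtain ⟨x, hx⟩ := inter_nonempty_of_card_lt_card_add_card hAF hBF hcard
  obtain ⟨hxA, hxB⟩ := mem_inter.mp hx
  obtain ⟨b, hb, rfl⟩ := mem_image.mp hxB
  exact mem_add.mpr ⟨g - b, hxA, b, hb, sub_add_cancel g b⟩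

theorem mem_add_of_mk'_mem_add (hodd : Odd (Nat.card (G ⧸ H))) (hT : -T = T)
    (hTH : ((T : Set G) + H).ncard < #T + Nat.card H) (hnt : ∃ t ∈ T, π t ≠ 0) {g : G}
    (hg : π g ∈ T.image π + T.image π) : g ∈ T + T := by
  have hXneg : ∀ ξ ∈ T.image π, -ξ ∈ T.image π := fun ξ hξ => by
    rw [← neg_image_mk'_eq hT]; exact neg_mem_neg hξ
  have hne_neg : ∀ ξ : G ⧸ H, ξ ≠ 0 → ξ ≠ -ξ := fun ξ hξ h =>
    hξ (eq_zero_of_neg_eq_self_of_odd_card hodd h.symm)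
  have key : ∀ ξ η : G ⧸ H, Nat.card H < #{t ∈ T | π t = ξ} + #{t ∈ T | π t = η} →
      π g = ξ + η → g ∈ T + T := fun ξ η hcard hsum =>
    add_subset_add (filter_subset (π · = ξ) T) (filter_subset (π · = η) T) <|
      mem_add_of_lt_card_add_card (fun _ ht => (mem_filter.mp ht).2)
        (fun _ ht => (mem_filter.mp ht).2) hcard hsum
  obtain ⟨ξ, hξ, η, hη, hsum⟩ := mem_add.mp hg
  obtain hne | rfl := ne_or_eq ξ η
  · exact key ξ η (lt_card_fibre_add_card_fibre hTH hξ hη hne) hsum.symm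
  obtain hξ0 | rfl := ne_or_eq ξ 0
  · -- the fibres over `ξ` and `-ξ` are equally large, and `ξ ≠ -ξ`
    have hcard := lt_card_fibre_add_card_fibre hTH hξ (hXneg ξ hξ) (hne_neg ξ hξ0)
    rw [card_fibre_neg hT] at hcard
    exact key ξ ξ hcard hsum.symm
  · -- write `0 = π t + π (-t)` with `π t ≠ 0`
    obtain ⟨t, ht, ht0⟩ := hnt
    have hcard := lt_card_fibre_add_card_fibre hTH (mem_image_of_mem π ht)
      (hXneg _ (mem_image_of_mem π ht)) (hne_neg _ ht0)
    exact key _ _ hcard (by rw [← hsum, add_zero, add_neg_cancel])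

theorem mem_nsmul_of_mk'_mem_nsmul (hodd : Odd (Nat.card (G ⧸ H))) (hT : -T = T)
    (hTH : ((T : Set G) + H).ncard < #T + Nat.card H) (hnt : ∃ t ∈ T, π t ≠ 0) :
    ∀ j, 2 ≤ j → ∀ g, π g ∈ j • T.image π → g ∈ j • T := by
  intro j hj
  induction j, hj using Nat.le_induction with
  | base =>
    intro g hg
    rw [two_nsmul] at hg ⊢
    exact mem_add_of_mk'_mem_add hodd hT hTH hnt hg
  | succ n _ ih =>
    intro g hg
    obtain ⟨y, hy, ξ, hξ, hsum⟩ := mem_add.mp (succ_nsmul (T.image π) n ▸ hg)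
    obtain ⟨t, ht, rfl⟩ := mem_image.mp hξ
    have hgt : π (g - t) ∈ n • T.image π := by
      rwa [map_sub, ← hsum, add_sub_cancel_right]
    rw [succ_nsmul]
    exact mem_add.mpr ⟨g - t, ih _ hgt, t, ht, sub_add_cancel g t⟩

theorem card_mul_card_nsmul_image_le (hodd : Odd (Nat.card (G ⧸ H))) (hT : -T = T)
    (hTH : ((T : Set G) + H).ncard < #T + Nat.card H) (hnt : ∃ t ∈ T, π t ≠ 0) {j : ℕ}
    (hj : 2 ≤ j) : Nat.card H * #(j • T.image π) ≤ #(j • T) :=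
  card_filter_mk'_mem (j • T.image π) ▸ card_le_card fun g hg =>
    mem_nsmul_of_mk'_mem_nsmul hodd hT hTH hnt j hj g (mem_filter.mp hg).2

end Quotient

theorem stmt_19 {G : Type*} [AddCommGroup G] [Fintype G] [DecidableEq G]
    (hodd : Odd (Fintype.card G)) (S : Finset G)
    (hgen : AddSubgroup.closure (S : Set G) = ⊤)
    (hV : ∃ H : AddSubgroup G,
      ((↑(S ∪ {0} ∪ S.image (fun x => -x)) : Set G) + (H : Set G)).ncard <
        min (Fintype.card G) ((S ∪ {0} ∪ S.image (fun x => -x)).card + Nat.card H) ∧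
      IsVosper ((QuotientAddGroup.mk' H) '' (↑(S ∪ {0} ∪ S.image (fun x => -x)) : Set G))) :
    ∀ j : ℕ, 1 ≤ j →
      min (Fintype.card G) (j * ((S ∪ {0} ∪ S.image (fun x => -x)).card + 1) - 1)
        ≤ (iterSumset (S ∪ {0} ∪ S.image (fun x => -x)) j).card := by
  classical
  obtain ⟨H, hTH, hV⟩ := hV
  set T := S ∪ {0} ∪ S.image (fun x => -x)
  set π := QuotientAddGroup.mk' H
  have hT0 : (0 : G) ∈ T := mem_union_left _ (mem_union_right _ (mem_singleton_self 0))
  have hTneg : -T = T := neg_union_zero_union_image_neg S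
  have hG : Nat.card G = Nat.card H * Nat.card (G ⧸ H) := by
    rw [AddSubgroup.card_eq_card_quotient_mul_card_addSubgroup, mul_comm]
  have hQodd : Odd (Nat.card (G ⧸ H)) := (Nat.card_eq_fintype_card (α := G) ▸ hodd).of_dvd_nat
    H.card_quotient_dvd_card
  rw [← Nat.card_eq_fintype_card, lt_min_iff] at hTH
  obtain ⟨s, hs, hs0⟩ := exists_mem_mk'_ne_zero hgen (ne_top_of_ncard_add_lt ⟨0, hT0⟩ hTH.1)
  have hsT : s ∈ T := mem_union_left _ (mem_union_left _ hs)
  have hX0 : (0 : G ⧸ H) ∈ T.image π := mem_image.mpr ⟨0, hT0, map_zero π⟩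
  have hX2 : 2 ≤ #(T.image π) := one_lt_card.mpr ⟨π s, mem_image_of_mem π hsT, 0, hX0, hs0⟩
  intro j hj
  rw [iterSumset_eq_nsmul, ← Nat.card_eq_fintype_card, hG]
  obtain rfl | hj2 := hj.eq_or_lt
  · simp
  calc min (Nat.card H * Nat.card (G ⧸ H)) (j * (#T + 1) - 1)
      ≤ Nat.card H * min (Nat.card (G ⧸ H)) (j * (#(T.image π) + 1) - 1) := by
        rw [← Nat.mul_min_mul_left]
        exact min_le_min_left _ (mul_add_one_sub_one_le hj Nat.card_pos (card_le_mul_card_image T))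
    _ ≤ Nat.card H * #(j • T.image π) := Nat.mul_le_mul_left _ <|
        IsVosper.min_card_le_card_nsmul hQodd (by rwa [coe_image]) hX0 (neg_image_mk'_eq hTneg)
          hX2 j hj
    _ ≤ #(j • T) := card_mul_card_nsmul_image_le hQodd hTneg hTH.2 ⟨s, hsT, hs0⟩ hj2
end
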